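/- Let f : C → Set A be an atomized model, let d and e be terms over C, and let f' be the full crossing of d into e. Then: (a) f' satisfies d ≤ e; and (b) for all terms s, t over C, if f satisfies s ≤ t then f' satisfies s ≤ t. In particular every negative relation satisfied by f' is satisfied by f, and if f does not satisfy d ≤ e then f' is strictly less free than f (it satisfies a positive relation, namely d ≤ e, that f does not). -/

import Mathlib

/-- The atom set of a term (set of constants) `t` under the atomized model `f`. -/
def atomSet {C A : Type*} (f : C → Set A) (t : Set C) : Set A := ⋃ c ∈ t, f c

/-- The atomized model `f` satisfies the positive relation `s ≤ t`. -/
def Sat {C A : Type*} (f : C → Set A) (s t : Set C) : Prop := atomSet f s ⊆ atomSet f t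

/-- The full crossing of the term `d` into the term `e` in the atomized model `f`.
With `D`, `E` the atom sets of `d`, `e` and `Φ = D \ E`: atom `Sum.inl x` belongs to
`f' c` iff `x ∈ f c` and `x ∉ Φ`; atom `Sum.inr (φ, ε)` belongs to `f' c` iff `φ ∈ Φ`,
`ε ∈ E` and (`φ ∈ f c` or `ε ∈ f c`). -/
def fullCross {C A : Type*} (f : C → Set A) (d e : Set C) : C → Set (A ⊕ A × A) :=
  fun c => {z | Sum.elim
    (fun x => x ∈ f c ∧ x ∉ atomSet f d \ atomSet f e)
    (fun p : A × A =>
      p.1 ∈ atomSet f d \ atomSet f e ∧ p.2 ∈ atomSet f e ∧ (p.1 ∈ f c ∨ p.2 ∈ f c)) z}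

/-!
Each atom of the crossing lies in `atomSet f' t` exactly when a condition that is monotone in
`atomSet f t` holds, so positive relations of `f` survive. For `d ≤ e`: an atom `inl x` of `d`
has `x ∈ D` but `x ∉ D \ E`, hence `x ∈ E`; an atom `inr (φ, ε)` has `ε ∈ E`, so it lies in
`f' c` for any `c ∈ e` with `ε ∈ f c`.
-/

section

variable {C A : Type*} (f : C → Set A) (d e : Set C)

theorem mem_atomSet {t : Set C} {x : A} : x ∈ atomSet f t ↔ ∃ c ∈ t, x ∈ f c :=
  Set.mem_iUnion₂.trans <| by simp only [exists_prop]

theorem inl_mem_atomSet_fullCross {t : Set C} {x : A} :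
    Sum.inl x ∈ atomSet (fullCross f d e) t ↔
      x ∈ atomSet f t ∧ x ∉ atomSet f d \ atomSet f e := by
  simp only [mem_atomSet, fullCross, Set.mem_ofPred_eq, Sum.elim_inl]
  constructor
  · rintro ⟨c, hc, hx, hΦ⟩
    exact ⟨⟨c, hc, hx⟩, hΦ⟩
  · rintro ⟨⟨c, hc, hx⟩, hΦ⟩
    exact ⟨c, hc, hx, hΦ⟩

theorem inr_mem_atomSet_fullCross {t : Set C} {p : A × A} :
    Sum.inr p ∈ atomSet (fullCross f d e) t ↔
      p.1 ∈ atomSet f d \ atomSet f e ∧ p.2 ∈ atomSet f e ∧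
        (p.1 ∈ atomSet f t ∨ p.2 ∈ atomSet f t) := by
  simp only [mem_atomSet, fullCross, Set.mem_ofPred_eq, Sum.elim_inr]
  constructor
  · rintro ⟨c, hc, hΦ, hE, h1 | h2⟩
    exacts [⟨hΦ, hE, .inl ⟨c, hc, h1⟩⟩, ⟨hΦ, hE, .inr ⟨c, hc, h2⟩⟩]
  · rintro ⟨hΦ, hE, ⟨c, hc, h1⟩ | ⟨c, hc, h2⟩⟩
    exacts [⟨c, hc, hΦ, hE, .inl h1⟩, ⟨c, hc, hΦ, hE, .inr h2⟩]

theorem sat_fullCross : Sat (fullCross f d e) d e := by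
  rintro (x | p) hz
  · obtain ⟨hxd, hΦ⟩ := (inl_mem_atomSet_fullCross f d e).1 hz
    have hxe : x ∈ atomSet f e := by_contra fun hxe => hΦ ⟨hxd, hxe⟩
    exact (inl_mem_atomSet_fullCross f d e).2 ⟨hxe, fun h => h.2 hxe⟩
  · obtain ⟨hΦ, hE, -⟩ := (inr_mem_atomSet_fullCross f d e).1 hz
    exact (inr_mem_atomSet_fullCross f d e).2 ⟨hΦ, hE, .inr hE⟩

theorem Sat.fullCross {s t : Set C} (hst : Sat f s t) : Sat (fullCross f d e) s t := by
  rintro (x | p) hz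
  · obtain ⟨hx, hΦ⟩ := (inl_mem_atomSet_fullCross f d e).1 hz
    exact (inl_mem_atomSet_fullCross f d e).2 ⟨hst hx, hΦ⟩
  · obtain ⟨hΦ, hE, hst'⟩ := (inr_mem_atomSet_fullCross f d e).1 hz
    exact (inr_mem_atomSet_fullCross f d e).2 ⟨hΦ, hE, hst'.imp (@hst _) (@hst _)⟩

end

/-- The full crossing of `d` into `e` (a) enforces `d ≤ e`, and
(b) preserves every positive relation between terms satisfied by `f`. -/
theorem fullCross_enforces_and_preserves {C A : Type*} (f : C → Set A) (d e : Set C) :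
    Sat (fullCross f d e) d e ∧
    (∀ s t : Set C, Sat f s t → Sat (fullCross f d e) s t) :=
  ⟨sat_fullCross f d e, fun _ _ hst => hst.fullCross f d e⟩
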